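/- Over the polynomial ring R = ℚ[y], let C(x) = x / ((1−x)(1−xy)) ∈ R[[x]], let D = C^{⟨−1⟩}, and let Δ(x) = (1 + x(1+y))² − 4x²y ∈ R[[x]]. Then there exists a unique power series s ∈ R[[x]] with constant term 1 such that s² = Δ, and for this s one has 2xy·D(x) = 1 + x(1+y) − s(x). -/

import Mathlib

open PowerSeries

/-- Composition `f ∘ g` of formal power series, intended for `g` with zero
constant term. -/
noncomputable def pscomp {R : Type*} [CommRing R] (f g : PowerSeries R) : PowerSeries R :=
  PowerSeries.mk fun n => ∑ k ∈ Finset.range (n + 1), (coeff k f) * (coeff n (g ^ k))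

section lemmas
variable {R : Type*} [CommRing R] {g : PowerSeries R} (hg : constantCoeff g = 0)

include hg in
theorem coeff_pow_comp_zero {n k : ℕ} (hk : n < k) : coeff n (g ^ k) = 0 := by
  have h1 : (X : PowerSeries R) ^ k ∣ g ^ k :=
    pow_dvd_pow_of_dvd (PowerSeries.X_dvd_iff.mpr hg) k
  exact PowerSeries.X_pow_dvd_iff.mp h1 n hk

include hg in
theorem coeff_eval₂_eq_zero {p : Polynomial R} {n : ℕ}
    (hp : ∀ i ≤ n, p.coeff i = 0) :
    coeff n (p.eval₂ (PowerSeries.C) g) = 0 := by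
  rw [Polynomial.eval₂_eq_sum, Polynomial.sum, map_sum]
  refine Finset.sum_eq_zero fun i _ => ?_
  rcases le_or_gt i n with h | h
  · simp [hp i h]
  · simp [coeff_pow_comp_zero hg h]


include hg in
theorem coeff_eval₂_congr {p q : Polynomial R} {n : ℕ}
    (hpq : ∀ i ≤ n, p.coeff i = q.coeff i) :
    coeff n (p.eval₂ (PowerSeries.C) g) = coeff n (q.eval₂ (PowerSeries.C) g) := by
  have := coeff_eval₂_eq_zero hg (p := p - q) (n := n) (fun i hi => by
    simp [hpq i hi])
  rw [Polynomial.eval₂_sub, map_sub, sub_eq_zero] at this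
  exact this

include hg in
theorem coeff_pscomp_eval (f : PowerSeries R) {n N : ℕ} (hN : n < N) :
    coeff n (pscomp f g) = coeff n ((trunc N f).eval₂ (PowerSeries.C) g) := by
  rw [eval₂_trunc_eq_sum_range, map_sum, pscomp, coeff_mk]
  rw [Finset.sum_subset (Finset.range_subset_range.mpr hN)]
  · exact Finset.sum_congr rfl fun i _ => by simp [mul_comm]
  · intro i _ hi
    rw [Finset.mem_range, not_lt] at hi
    have : n < i := Nat.lt_of_lt_of_le (Nat.lt_succ_self n) hi
    simp [coeff_pow_comp_zero hg this]

include hg in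
theorem pscomp_mul (f₁ f₂ : PowerSeries R) :
    pscomp (f₁ * f₂) g = pscomp f₁ g * pscomp f₂ g := by
  ext n
  rw [coeff_pscomp_eval hg _ (Nat.lt_succ_self n)]
  rw [coeff_eval₂_congr hg (q := trunc (n+1) f₁ * trunc (n+1) f₂) (fun i hi => by
    rw [Polynomial.coeff_mul, coeff_trunc, if_pos (Nat.lt_succ_of_le hi)]
    rw [PowerSeries.coeff_mul]
    refine Finset.sum_congr rfl fun x hx => ?_
    rw [Finset.HasAntidiagonal.mem_antidiagonal] at hx
    rw [coeff_trunc, coeff_trunc, if_pos, if_pos]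
    · exact Nat.lt_succ_of_le (le_trans (hx ▸ Nat.le_add_left _ _) hi)
    · exact Nat.lt_succ_of_le (le_trans (hx ▸ Nat.le_add_right _ _) hi))]
  rw [Polynomial.eval₂_mul, PowerSeries.coeff_mul, PowerSeries.coeff_mul]
  refine Finset.sum_congr rfl fun x hx => ?_
  rw [Finset.HasAntidiagonal.mem_antidiagonal] at hx
  rw [← coeff_pscomp_eval hg f₁ (Nat.lt_succ_of_le (hx ▸ Nat.le_add_right _ _)),
    ← coeff_pscomp_eval hg f₂ (Nat.lt_succ_of_le (hx ▸ Nat.le_add_left _ _))]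

theorem pscomp_sub (f₁ f₂ : PowerSeries R) :
    pscomp (f₁ - f₂) g = pscomp f₁ g - pscomp f₂ g := by
  ext n
  simp [pscomp, sub_mul, Finset.sum_sub_distrib]

theorem pscomp_one : pscomp 1 g = 1 := by
  ext n
  simp only [pscomp, coeff_mk]
  rw [Finset.sum_eq_single 0]
  · simp
  · intro i _ hi
    simp [PowerSeries.coeff_one, hi]
  · simp

theorem pscomp_C (a : R) : pscomp (PowerSeries.C a) g = PowerSeries.C a := by
  ext n
  simp only [pscomp, coeff_mk]
  rw [Finset.sum_eq_single 0]
  · simp [PowerSeries.coeff_C, PowerSeries.coeff_one, mul_ite]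
  · intro i _ hi
    simp [PowerSeries.coeff_C, hi]
  · simp

include hg in
theorem pscomp_X : pscomp X g = g := by
  ext n
  simp only [pscomp, coeff_mk]
  cases n with
  | zero => simpa [PowerSeries.coeff_X] using hg.symm
  | succ m =>
    rw [Finset.sum_eq_single 1]
    · simp
    · intro i _ hi
      simp [PowerSeries.coeff_X, hi]
    · intro h
      exact absurd (Finset.mem_range.mpr (by omega)) h

end lemmas

/-- The variable `y`, viewed as a constant power series over `R = ℚ[y]`. -/
noncomputable def Y : PowerSeries (Polynomial ℚ) :=
  PowerSeries.C Polynomial.X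

/-- **A square-root formula for the compositional inverse of
`x/((1−x)(1−xy))`.**  Over `R = ℚ[y]`, let `C(x) = x/((1−x)(1−xy))`, let
`D = C^{⟨−1⟩}`, and let `Δ(x) = (1 + x(1+y))² − 4x²y`.  Then there is a
unique power series `s ∈ R[[x]]` with constant term `1` such that `s² = Δ`,
and for this `s` one has `2xy·D(x) = 1 + x(1+y) − s(x)`. -/
theorem compositional_inverse_sqrt_formula (C D Δ : PowerSeries (Polynomial ℚ))
    (hC : C * ((1 - X) * (1 - X * Y)) = X)
    (hD0 : constantCoeff D = 0)
    (hCD : pscomp C D = X) (hDC : pscomp D C = X)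
    (hΔ : Δ = (1 + X * (1 + Y)) ^ 2 - 4 * X ^ 2 * Y) :
    (∃! s : PowerSeries (Polynomial ℚ), constantCoeff s = 1 ∧ s ^ 2 = Δ) ∧
    (∀ s : PowerSeries (Polynomial ℚ), constantCoeff s = 1 → s ^ 2 = Δ →
      2 * X * Y * D = 1 + X * (1 + Y) - s) := by
  -- quadratic equation for D
  have hquad : X * ((1 - D) * (1 - D * Y)) = D := by
    have hY : pscomp Y D = Y := pscomp_C Polynomial.X
    have h := congrArg (fun f => pscomp f D) hC
    simp only [pscomp_mul hD0, pscomp_sub, pscomp_one, pscomp_X hD0, hY, hCD] at h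
    exact h
  -- the canonical square root
  set s₀ : PowerSeries (Polynomial ℚ) := 1 + X * (1 + Y) - 2 * X * Y * D with hs₀
  have hs₀c : constantCoeff s₀ = 1 := by
    simp [hs₀, Y, hD0]
  have hs₀sq : s₀ ^ 2 = Δ := by
    rw [hΔ]
    linear_combination (4 * X * Y) * hquad
  have main : ∀ s : PowerSeries (Polynomial ℚ), constantCoeff s = 1 →
      s ^ 2 = Δ → s = s₀ := by
    intro s hs1 hs2
    have h : (s - s₀) * (s + s₀) = 0 := by linear_combination hs2 - hs₀sq
    rcases mul_eq_zero.mp h with h | h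
    · exact sub_eq_zero.mp h
    · exfalso
      have h2 := congrArg (constantCoeff) h
      rw [map_add, hs1, hs₀c, map_zero] at h2
      norm_num at h2
  constructor
  · exact ⟨s₀, ⟨hs₀c, hs₀sq⟩, fun s ⟨h1, h2⟩ => main s h1 h2⟩
  · intro s h1 h2
    rw [main s h1 h2, hs₀]
    ring
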